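/- arXiv:1809.05974 — 3 statements merged into one kernel-verified Lean document; each statement's English description precedes it below -/
import Mathlib

section
/- Let G be a (K_8, K_{2,2,2,2,2}, 5)-cockade and let x, y be nonadjacent vertices of G. Then the graph G + xy obtained by adding the edge xy contains K_9 minus two edges as a minor (i.e., contains some graph in the family of complete graphs on 9 vertices with two edges deleted as a minor). -/
open SimpleGraph

/-- The complete 5-partite graph `K_{2,2,2,2,2}`. -/
abbrev K22222 : SimpleGraph (Σ _ : Fin 5, Fin 2) :=
  SimpleGraph.completeMultipartiteGraph fun _ => Fin 2

/-- An `(H₁, H₂, k)`-cockade: any graph isomorphic to `H₁` or `H₂` is one, and identifying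
cliques of size `k` in two cockades yields one (expressed via a decomposition of the glued
graph into the two overlapping pieces). -/
inductive IsCockade {α β : Type} (H₁ : SimpleGraph α) (H₂ : SimpleGraph β) (k : ℕ) :
    {V : Type} → SimpleGraph V → Prop
  | base₁ {V : Type} (G : SimpleGraph V) : Nonempty (G ≃g H₁) → IsCockade H₁ H₂ k G
  | base₂ {V : Type} (G : SimpleGraph V) : Nonempty (G ≃g H₂) → IsCockade H₁ H₂ k G
  | glue {V : Type} (G : SimpleGraph V) (A B : Set V) :
      A ∪ B = Set.univ → ¬ A ⊆ B → ¬ B ⊆ A →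
      (A ∩ B).ncard = k → G.IsClique (A ∩ B) →
      (∀ u ∈ A \ B, ∀ v ∈ B \ A, ¬ G.Adj u v) →
      IsCockade H₁ H₂ k (G.induce A) → IsCockade H₁ H₂ k (G.induce B) →
      IsCockade H₁ H₂ k G

/-- A `(K₈, K_{2,2,2,2,2}, 5)`-cockade. -/
abbrev Cockade85 {V : Type} (G : SimpleGraph V) : Prop :=
  IsCockade (⊤ : SimpleGraph (Fin 8)) K22222 5 G

/-- `H` is a minor of `G`, via branch sets. -/
def IsMinorOf {W V : Type} (H : SimpleGraph W) (G : SimpleGraph V) : Prop :=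
  ∃ B : W → Set V,
    (∀ w, (B w).Nonempty) ∧
    (∀ w, (G.induce (B w)).Connected) ∧
    (Pairwise fun w₁ w₂ => Disjoint (B w₁) (B w₂)) ∧
    (∀ w₁ w₂, H.Adj w₁ w₂ → ∃ u ∈ B w₁, ∃ v ∈ B w₂, G.Adj u v)

/-- `G` contains `K_t` minus two edges as a minor (either of the two nonisomorphic graphs). -/
def HasKEqMinor (t : ℕ) {V : Type} (G : SimpleGraph V) : Prop :=
  ∃ e₁ e₂ : Sym2 (Fin t), e₁ ≠ e₂ ∧ ¬ e₁.IsDiag ∧ ¬ e₂.IsDiag ∧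
    IsMinorOf ((⊤ : SimpleGraph (Fin t)).deleteEdges {e₁, e₂}) G


/-- Add to `G` a new vertex (the `none` vertex) adjacent exactly to the vertices in `N`. -/
def addVertex {V : Type} (G : SimpleGraph V) (N : Set V) : SimpleGraph (Option V) where
  Adj a b :=
    match a, b with
    | some u, some w => G.Adj u w
    | some u, none => u ∈ N
    | none, some w => w ∈ N
    | none, none => False
  symm := ⟨by rintro (_ | u) (_ | w) h <;> first | exact h | exact h.symm⟩
  loopless := ⟨by
    rintro (_ | u) h
    · exact h
    · exact G.loopless.irrefl u h⟩

/-- The graph obtained from `G` by contracting the edge `xy` (the merged vertex is `x`,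
and `y` is deleted). -/
def contractEdge {V : Type} (G : SimpleGraph V) (x y : V) :
    SimpleGraph {z : V // z ≠ y} where
  Adj a b := a ≠ b ∧
    (G.Adj a b ∨ ((a : V) = x ∧ G.Adj y b) ∨ ((b : V) = x ∧ G.Adj y a))
  symm := ⟨by
    rintro a b ⟨hne, h⟩
    refine ⟨hne.symm, ?_⟩
    rcases h with h | ⟨h1, h2⟩ | ⟨h1, h2⟩
    · exact Or.inl h.symm
    · exact Or.inr (Or.inr ⟨h1, h2⟩)
    · exact Or.inr (Or.inl ⟨h1, h2⟩)⟩
  loopless := ⟨fun a h => h.1 rfl⟩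

/-- The join of two graphs. -/
def joinGraph {α β : Type} (G : SimpleGraph α) (H : SimpleGraph β) : SimpleGraph (α ⊕ β) where
  Adj a b :=
    match a, b with
    | .inl a, .inl b => G.Adj a b
    | .inr a, .inr b => H.Adj a b
    | .inl _, .inr _ => True
    | .inr _, .inl _ => True
  symm := ⟨by rintro (a | a) (b | b) h <;> first | exact h.symm | trivial⟩
  loopless := ⟨by rintro (a | a) h; exacts [G.loopless.irrefl a h, H.loopless.irrefl a h]⟩

/-- The disjoint union of two graphs. -/
def disjUnionGraph {α β : Type} (G : SimpleGraph α) (H : SimpleGraph β) :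
    SimpleGraph (α ⊕ β) where
  Adj a b :=
    match a, b with
    | .inl a, .inl b => G.Adj a b
    | .inr a, .inr b => H.Adj a b
    | .inl _, .inr _ => False
    | .inr _, .inl _ => False
  symm := ⟨by rintro (a | a) (b | b) h <;> first | exact h.symm | exact h⟩
  loopless := ⟨by rintro (a | a) h; exacts [G.loopless.irrefl a h, H.loopless.irrefl a h]⟩

/-- The cycle graph `C_n` on `ZMod n`. -/
def cycleG (n : ℕ) [NeZero n] : SimpleGraph (ZMod n) :=
  SimpleGraph.fromRel fun i j => i - j = 1

/-- The Petersen graph, as the Kneser graph on 2-element subsets of a 5-element set. -/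
def petersen : SimpleGraph {s : Finset (Fin 5) // s.card = 2} where
  Adj a b := Disjoint a.1 b.1
  symm := ⟨fun _ _ h => h.symm⟩
  loopless := ⟨by
    intro a h
    have h2 := a.2
    rw [disjoint_self.mp h] at h2
    simp at h2⟩

/-- `G` is `k`-connected: more than `k` vertices, and removing fewer than `k` vertices
leaves a connected graph. -/
def IsKConnected {V : Type} [Fintype V] (k : ℕ) (G : SimpleGraph V) : Prop :=
  k < Fintype.card V ∧ ∀ S : Set V, S.ncard < k → (G.induce Sᶜ).Connected

/-- `G - v` has a `K₄` minor rooted at the 4-element set `T` (with `v ∉ T`): four disjoint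
branch sets avoiding `v`, each inducing a connected subgraph, each meeting `T` in exactly
one vertex, and pairwise joined by an edge. -/
def HasRootedK4MinorAvoiding {V : Type} (G : SimpleGraph V) (T : Set V) (v : V) : Prop :=
  ∃ (t : Fin 4 → V) (B : Fin 4 → Set V),
    Function.Injective t ∧ Set.range t = T ∧
    (∀ i, v ∉ B i) ∧ (∀ i, B i ∩ T = {t i}) ∧
    (∀ i, (G.induce (B i)).Connected) ∧
    (Pairwise fun i j => Disjoint (B i) (B j)) ∧
    (Pairwise fun i j => ∃ a ∈ B i, ∃ b ∈ B j, G.Adj a b)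


/-!
Induction on the cockade, carrying two properties of a 5-clique `C` and a vertex `x ∉ C`:
`FiveCliquesDominable` (`x` lies in a connected set avoiding `C` with a neighbour at every vertex
of `C`) and `FiveCliquesApexMinor` (a new vertex joined to `C ∪ {x}` creates a `K₉⁼` minor).
Both hold in `K₈` and `K_{2,2,2,2,2}`. They survive gluing along a 5-clique `S`: if `C` lies on
one side and `x` strictly on the other, pick `c ∈ S \ C`, apply the property on the side of `C`
to `c`, and take a connected set around `x` dominating `S` on the other side; it reaches `c`, or
is contracted into the new vertex. For the theorem, if `S` separates `x` from `y`, a connected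
set around `y` dominating `S` contracts, through the edge `xy`, to a vertex joined to `S ∪ {x}`,
so the second property for `x` and `S` on the side of `x` gives the minor.
-/

open Set

section Connectivity

variable {V W : Type}

lemma induce_singleton_connected (G : SimpleGraph V) (a : V) : (G.induce {a}).Connected :=
  (connected_iff _).2 ⟨.of_subsingleton, ⟨⟨a, rfl⟩⟩⟩

lemma induce_image_connected {G₀ : SimpleGraph W} {G : SimpleGraph V} (f : G₀ →g G)
    {S : Set W} (hS : (G₀.induce S).Connected) : (G.induce (f '' S)).Connected := by
  let g : G₀.induce S →g G.induce (f '' S) := ⟨fun v => ⟨f v, mem_image_of_mem f v.2⟩, f.map_rel⟩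
  exact hS.map g (by rintro ⟨_, a, ha, rfl⟩; exact ⟨⟨a, ha⟩, rfl⟩)

lemma induce_biUnion_connected {H : SimpleGraph W} {G : SimpleGraph V} {S : Set W}
    {B : W → Set V} (hS : (H.induce S).Connected) (hB : ∀ w ∈ S, (G.induce (B w)).Connected)
    (hadj : ∀ u ∈ S, ∀ w ∈ S, H.Adj u w → ∃ a ∈ B u, ∃ b ∈ B w, G.Adj a b) :
    (G.induce (⋃ w ∈ S, B w)).Connected := by
  have hBU : ∀ w ∈ S, B w ⊆ ⋃ w ∈ S, B w := fun w hw => subset_biUnion_of_mem hw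
  have inside : ∀ w (hw : w ∈ S) a (ha : a ∈ B w) b (hb : b ∈ B w),
      (G.induce (⋃ w ∈ S, B w)).Reachable ⟨a, hBU w hw ha⟩ ⟨b, hBU w hw hb⟩ :=
    fun w hw a ha b hb =>
      ((hB w hw).preconnected ⟨a, ha⟩ ⟨b, hb⟩).map (induceHomOfLE G (hBU w hw)).toHom
  have along : ∀ u v : ↥S, (H.induce S).Reachable u v → ∀ a (ha : a ∈ B u) b (hb : b ∈ B v),
      (G.induce (⋃ w ∈ S, B w)).Reachable ⟨a, hBU u u.2 ha⟩ ⟨b, hBU v v.2 hb⟩ := by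
    intro u v huv
    rw [reachable_iff_reflTransGen] at huv
    induction huv with
    | refl => exact inside u u.2
    | tail _ hvw ih =>
      intro a ha c hc
      obtain ⟨b, hb, b', hb', hbb'⟩ := hadj _ (Subtype.prop _) _ (Subtype.prop _) hvw
      have hstep : (G.induce (⋃ w ∈ S, B w)).Adj ⟨b, hBU _ (Subtype.prop _) hb⟩
          ⟨b', hBU _ (Subtype.prop _) hb'⟩ := hbb'
      exact (ih a ha b hb).trans (hstep.reachable.trans (inside _ (Subtype.prop _) b' hb' c hc))
  obtain ⟨w₀⟩ := hS.nonempty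
  obtain ⟨⟨a₀, ha₀⟩⟩ := (hB w₀ w₀.2).nonempty
  refine (connected_iff _).2 ⟨?_, ⟨⟨a₀, hBU _ w₀.2 ha₀⟩⟩⟩
  rintro ⟨a, ha⟩ ⟨b, hb⟩
  obtain ⟨u, hu, hau⟩ := mem_iUnion₂.1 ha
  obtain ⟨v, hv, hbv⟩ := mem_iUnion₂.1 hb
  exact along ⟨u, hu⟩ ⟨v, hv⟩ (hS.preconnected _ _) a hau b hbv

end Connectivity

section Minors

variable {V W X : Type}

lemma IsMinorOf.trans {H : SimpleGraph X} {G₁ : SimpleGraph W} {G : SimpleGraph V}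
    (h₁ : IsMinorOf H G₁) (h₂ : IsMinorOf G₁ G) : IsMinorOf H G := by
  obtain ⟨B₁, hne₁, hconn₁, hdisj₁, hadj₁⟩ := h₁
  obtain ⟨B₂, hne₂, hconn₂, hdisj₂, hadj₂⟩ := h₂
  refine ⟨fun x => ⋃ w ∈ B₁ x, B₂ w, fun x => ?_, fun x => ?_, fun x y hxy => ?_,
    fun x y hxy => ?_⟩
  · obtain ⟨w, hw⟩ := hne₁ x
    obtain ⟨a, ha⟩ := hne₂ w
    exact ⟨a, mem_biUnion hw ha⟩
  · exact induce_biUnion_connected (hconn₁ x) (fun w _ => hconn₂ w) fun u _ w _ => hadj₂ u w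
  · simp only [disjoint_iUnion_left, disjoint_iUnion_right]
    exact fun u hu w hw => hdisj₂ ((hdisj₁ hxy).ne_of_mem hw hu)
  · obtain ⟨u, hu, w, hw, huw⟩ := hadj₁ x y hxy
    obtain ⟨a, ha, b, hb, hab⟩ := hadj₂ u w huw
    exact ⟨a, mem_biUnion hu ha, b, mem_biUnion hw hb, hab⟩

lemma isMinorOf_of_injective {G₀ : SimpleGraph W} {G : SimpleGraph V} (f : G₀ →g G)
    (hf : Function.Injective f) : IsMinorOf G₀ G :=
  ⟨fun w => {f w}, fun _ => singleton_nonempty _, fun _ => induce_singleton_connected G _,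
    fun _ _ h => disjoint_singleton.2 (hf.ne h), fun u w h => ⟨f u, rfl, f w, rfl, f.map_rel h⟩⟩

lemma isMinorOf_addVertex {G₀ : SimpleGraph W} {G : SimpleGraph V} (f : G₀ →g G)
    (hf : Function.Injective f) {N : Set W} {L : Set V} (hL : (G.induce L).Connected)
    (hfL : ∀ w, f w ∉ L) (hN : ∀ n ∈ N, ∃ l ∈ L, G.Adj l (f n)) :
    IsMinorOf (addVertex G₀ N) G := by
  refine ⟨fun o => o.elim L fun w => {f w}, ?_, ?_, ?_, ?_⟩
  · rintro (_ | w)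
    · obtain ⟨⟨l, hl⟩⟩ := hL.nonempty
      exact ⟨l, hl⟩
    · exact singleton_nonempty _
  · rintro (_ | w)
    exacts [hL, induce_singleton_connected G _]
  · rintro (_ | u) (_ | w) h
    · exact absurd rfl h
    · exact disjoint_singleton_right.2 (hfL w)
    · exact disjoint_singleton_left.2 (hfL u)
    · exact disjoint_singleton.2 (hf.ne fun e => h (congrArg some e))
  · rintro (_ | u) (_ | w) h
    · exact h.elim
    · obtain ⟨l, hl, hlw⟩ := hN w h
      exact ⟨l, hl, f w, rfl, hlw⟩
    · obtain ⟨l, hl, hlu⟩ := hN u h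
      exact ⟨f u, rfl, l, hl, hlu.symm⟩
    · exact ⟨f u, rfl, f w, rfl, f.map_rel h⟩

def addVertex.inclusion (G : SimpleGraph V) (N : Set V) : G →g addVertex G N := ⟨some, id⟩

lemma isMinorOf_addVertex_map {G₀ : SimpleGraph W} {G : SimpleGraph V} (f : G₀ →g G)
    (hf : Function.Injective f) {N₀ : Set W} {N : Set V} (hN : ∀ n ∈ N₀, f n ∈ N) :
    IsMinorOf (addVertex G₀ N₀) (addVertex G N) :=
  isMinorOf_addVertex ((addVertex.inclusion G N).comp f) (Option.some_injective _ |>.comp hf)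
    (induce_singleton_connected _ none) (fun _ => Option.some_ne_none _)
    fun n hn => ⟨none, rfl, hN n hn⟩

lemma isMinorOf_sup_edge_map {G₀ : SimpleGraph W} {G : SimpleGraph V} (f : G₀ →g G)
    (hf : Function.Injective f) (a b : W) :
    IsMinorOf (G₀ ⊔ fromEdgeSet {s(a, b)}) (G ⊔ fromEdgeSet {s(f a, f b)}) := by
  refine isMinorOf_of_injective ⟨f, fun {u v} h => ?_⟩ hf
  rw [sup_adj, fromEdgeSet_adj, mem_singleton_iff] at h ⊢
  rcases h with h | ⟨huv, hne⟩
  · exact Or.inl (f.map_rel h)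
  · exact Or.inr ⟨by rw [← Sym2.map_mk, ← Sym2.map_mk, huv], hf.ne hne⟩

lemma HasKEqMinor.of_isMinorOf {t : ℕ} {G₀ : SimpleGraph W} {G : SimpleGraph V}
    (h : HasKEqMinor t G₀) (hG : IsMinorOf G₀ G) : HasKEqMinor t G :=
  let ⟨e₁, e₂, he, h₁, h₂, hm⟩ := h
  ⟨e₁, e₂, he, h₁, h₂, hm.trans hG⟩

instance addVertex.instDecidableRelAdj {G : SimpleGraph V} {N : Set V} [DecidableRel G.Adj]
    [DecidablePred (· ∈ N)] : DecidableRel (addVertex G N).Adj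
  | some u, some w => inferInstanceAs (Decidable (G.Adj u w))
  | some u, none => inferInstanceAs (Decidable (u ∈ N))
  | none, some w => inferInstanceAs (Decidable (w ∈ N))
  | none, none => isFalse id

-- Branch sets `{p w, q w}` of at most two vertices, in a form that `decide` checks on concrete
-- graphs.
lemma isMinorOf_of_pairs {H : SimpleGraph W} {G : SimpleGraph V} (p q : W → V)
    (hpq : ∀ w, p w = q w ∨ G.Adj (p w) (q w))
    (hdisj : ∀ u w, u ≠ w → p u ≠ p w ∧ p u ≠ q w ∧ q u ≠ q w)
    (hadj : ∀ u w, H.Adj u w → ∃ a ∈ [p u, q u], ∃ b ∈ [p w, q w], G.Adj a b) :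
    IsMinorOf H G := by
  refine ⟨fun w => {p w, q w}, fun w => insert_nonempty _ _,
    fun w => show (G.induce {p w, q w}).Connected from ?_, fun u w huw => ?_, fun u w huw => ?_⟩
  · rcases hpq w with h | h
    · rw [h, pair_eq_singleton]
      exact induce_singleton_connected G _
    · exact induce_pair_connected_of_adj h
  · have h₁ := hdisj u w huw
    have h₂ := hdisj w u huw.symm
    simp only [disjoint_insert_left, disjoint_insert_right, mem_insert_iff, mem_singleton_iff,
      disjoint_singleton]
    tauto
  · obtain ⟨a, ha, b, hb, hab⟩ := hadj u w huw
    simp only [List.mem_cons, List.not_mem_nil, or_false] at ha hb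
    exact ⟨a, by simpa using ha, b, by simpa using hb, hab⟩

end Minors

section CompleteMultipartite

variable {V : Type}

def relabelParts {ι : Type} (σ : Equiv.Perm ι) (f : ι → Fin 2) :
    completeMultipartiteGraph (fun _ : ι => Fin 2) ≃g
      completeMultipartiteGraph (fun _ : ι => Fin 2) where
  toFun v := ⟨σ v.1, v.2 + f (σ v.1)⟩
  invFun v := ⟨σ.symm v.1, v.2 - f v.1⟩
  left_inv v := by simp
  right_inv v := by simp
  map_rel_iff' := σ.injective.ne_iff

lemma relabelParts_apply {ι : Type} (σ : Equiv.Perm ι) (f : ι → Fin 2) (v : Σ _ : ι, Fin 2) :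
    relabelParts σ f v = ⟨σ v.1, v.2 + f (σ v.1)⟩ := rfl

lemma exists_mem_part_of_isClique {ι : Type} [Fintype ι] {P : ι → Type}
    {C : Set (Σ i, P i)} (hC : (completeMultipartiteGraph P).IsClique C)
    (hcard : C.ncard = Fintype.card ι) (i : ι) : ∃ b, ⟨i, b⟩ ∈ C := by
  have hinj : InjOn Sigma.fst C := fun a ha b hb h => by_contra fun hab => hC ha hb hab h
  have himage : Sigma.fst '' C = univ :=
    eq_of_subset_of_ncard_le (subset_univ _)
      (by rw [ncard_univ, Nat.card_eq_fintype_card, hinj.ncard_image, hcard])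
      (toFinite _)
  obtain ⟨⟨j, b⟩, hb, rfl⟩ : i ∈ Sigma.fst '' C := himage ▸ mem_univ i
  exact ⟨b, hb⟩

lemma eq_of_mem_part_of_isClique {ι : Type} {P : ι → Type} {C : Set (Σ i, P i)}
    (hC : (completeMultipartiteGraph P).IsClique C) {i : ι} {a b : P i}
    (ha : ⟨i, a⟩ ∈ C) (hb : ⟨i, b⟩ ∈ C) : a = b :=
  by_contra fun hab => hC ha hb (by simpa using hab) rfl

lemma fin_two_eq_one_add_of_ne : ∀ {a b : Fin 2}, a ≠ b → a = 1 + b := by decide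

variable {G : SimpleGraph V}

lemma exists_iso_K22222_of_isClique (e : G ≃g K22222) {C : Set V} (hC : G.IsClique C)
    (h5 : C.ncard = 5) {x : V} (hx : x ∉ C) :
    ∃ ψ : K22222 ≃g G, ψ ⟨0, 1⟩ = x ∧ ∀ v, ψ v ∈ C ↔ v.2 = 0 := by
  have hC' : K22222.IsClique (e '' C) := by
    rintro _ ⟨a, ha, rfl⟩ _ ⟨b, hb, rfl⟩ hab
    exact e.map_adj_iff.2 (hC ha hb fun h => hab (h ▸ rfl))
  have h5' : (e '' C).ncard = Fintype.card (Fin 5) := by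
    rw [ncard_image_of_injective _ e.injective, h5, Fintype.card_fin]
  choose f hf using exists_mem_part_of_isClique hC' h5'
  have hmem : ∀ v, e.symm v ∈ C ↔ v ∈ e '' C := fun v => by
    rw [← e.apply_symm_apply v, e.injective.mem_set_image, e.apply_symm_apply]
  have hfx : (e x).2 ≠ f (e x).1 := fun h => hx <| by
    have hx' := hf (e x).1
    rw [← h] at hx'
    exact e.injective.mem_set_image.1 hx'
  refine ⟨(relabelParts (Equiv.swap 0 (e x).1) f).trans e.symm, ?_, fun ⟨i, b⟩ => ?_⟩
  · rw [RelIso.trans_apply, relabelParts_apply, e.symm_apply_eq, Equiv.swap_apply_left]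
    exact Sigma.ext rfl (heq_of_eq (fin_two_eq_one_add_of_ne hfx).symm)
  · rw [RelIso.trans_apply, relabelParts_apply, hmem]
    constructor
    · intro h
      simpa using eq_of_mem_part_of_isClique hC' h (hf _)
    · rintro rfl
      simpa using hf _

lemma exists_iso_K22222_of_not_adj (e : G ≃g K22222) {x y : V} (hxy : x ≠ y)
    (hna : ¬ G.Adj x y) : ∃ ψ : K22222 ≃g G, ψ ⟨0, 0⟩ = x ∧ ψ ⟨0, 1⟩ = y := by
  have hpart : (e x).1 = (e y).1 := by_contra fun h => hna (e.map_adj_iff.1 h)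
  have hne : (e x).2 ≠ (e y).2 := fun h => hxy (e.injective (Sigma.ext hpart (heq_of_eq h)))
  refine ⟨(relabelParts (Equiv.swap 0 (e x).1) fun _ => (e x).2).trans e.symm, ?_, ?_⟩ <;>
    rw [RelIso.trans_apply, relabelParts_apply, e.symm_apply_eq, Equiv.swap_apply_left]
  · exact Sigma.ext rfl (heq_of_eq (zero_add _))
  · exact Sigma.ext hpart (heq_of_eq (fin_two_eq_one_add_of_ne hne.symm).symm)

end CompleteMultipartite

section Properties

variable {V : Type}

def IsDominatingBranchSet (G : SimpleGraph V) (C L : Set V) : Prop :=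
  (G.induce L).Connected ∧ Disjoint L C ∧ ∀ c ∈ C, ∃ l ∈ L, G.Adj l c

def FiveCliquesDominable (G : SimpleGraph V) : Prop :=
  ∀ C : Set V, C.ncard = 5 → G.IsClique C → ∀ y ∉ C, ∃ L, y ∈ L ∧ IsDominatingBranchSet G C L

def FiveCliquesApexMinor (G : SimpleGraph V) : Prop :=
  ∀ C : Set V, C.ncard = 5 → G.IsClique C → ∀ x ∉ C, HasKEqMinor 9 (addVertex G (insert x C))

variable {G : SimpleGraph V}

lemma adj_of_iso_top {α : Type} (e : G ≃g (⊤ : SimpleGraph α)) {u v : V} (h : u ≠ v) :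
    G.Adj u v :=
  e.map_adj_iff.1 (e.injective.ne h)

lemma fiveCliquesDominable_of_forall_adj (hG : ∀ u v, u ≠ v → G.Adj u v) :
    FiveCliquesDominable G :=
  fun _ _ _ y hy => ⟨{y}, rfl, induce_singleton_connected G y, disjoint_singleton_left.2 hy,
    fun _ hc => ⟨y, rfl, hG _ _ (ne_of_mem_of_not_mem hc hy).symm⟩⟩

lemma fiveCliquesDominable_of_iso_K22222 (e : G ≃g K22222) : FiveCliquesDominable G := by
  intro C h5 hC y hy
  obtain ⟨ψ, hψy, hψC⟩ := exists_iso_K22222_of_isClique e hC h5 hy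
  refine ⟨{ψ ⟨0, 1⟩, ψ ⟨1, 1⟩}, Or.inl hψy.symm,
    induce_pair_connected_of_adj (ψ.map_adj_iff.2 (by decide)), ?_, fun c hc => ?_⟩
  · simp only [disjoint_insert_left, disjoint_singleton_left, hψC]
    decide
  · obtain ⟨v, rfl⟩ := ψ.surjective c
    have key : ∀ v : Σ _ : Fin 5, Fin 2, v.2 = 0 → K22222.Adj ⟨0, 1⟩ v ∨ K22222.Adj ⟨1, 1⟩ v := by
      decide
    rcases key v ((hψC v).1 hc) with h | h
    exacts [⟨_, Or.inl rfl, ψ.map_adj_iff.2 h⟩, ⟨_, Or.inr rfl, ψ.map_adj_iff.2 h⟩]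

lemma hasKEqMinor_addVertex_top {n : ℕ} {N : Set (Fin n)} {a b : Fin n} (hab : a ≠ b)
    (hN : ∀ i, i ∈ N ∨ i = a ∨ i = b) : HasKEqMinor (n + 1) (addVertex ⊤ N) := by
  refine ⟨s(0, a.succ), s(0, b.succ), by simpa using hab, by simpa using (Fin.succ_ne_zero a).symm,
    by simpa using (Fin.succ_ne_zero b).symm,
    isMinorOf_of_injective ⟨finSuccEquiv n, fun {u v} h => ?_⟩ (finSuccEquiv n).injective⟩
  rw [deleteEdges_adj, top_adj] at h
  simp only [mem_insert_iff, mem_singleton_iff, not_or] at h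
  obtain ⟨huv, hua, hub⟩ := h
  cases u using Fin.cases with
  | zero =>
    cases v using Fin.cases with
    | zero => exact absurd rfl huv
    | succ j =>
      rw [finSuccEquiv_zero, finSuccEquiv_succ]
      rcases hN j with h | rfl | rfl
      exacts [h, absurd rfl hua, absurd rfl hub]
  | succ i =>
    cases v using Fin.cases with
    | zero =>
      rw [finSuccEquiv_zero, finSuccEquiv_succ]
      rcases hN i with h | rfl | rfl
      exacts [h, absurd Sym2.eq_swap hua, absurd Sym2.eq_swap hub]
    | succ j =>
      rw [finSuccEquiv_succ, finSuccEquiv_succ]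
      exact fun h => huv (h ▸ rfl)

lemma fiveCliquesApexMinor_of_iso_top (e : G ≃g (⊤ : SimpleGraph (Fin 8))) :
    FiveCliquesApexMinor G := by
  intro C h5 _ x hx
  have : Finite V := Finite.of_equiv _ e.toEquiv.symm
  have h6 : (insert x C).ncard = 6 := by rw [ncard_insert_of_notMem hx, h5]
  have h2 : (insert x C)ᶜ.ncard = 2 := by
    have := ncard_add_ncard_compl (insert x C)
    rw [Nat.card_congr e.toEquiv, Nat.card_eq_fintype_card, Fintype.card_fin] at this
    omega
  obtain ⟨a, b, hab, hcompl⟩ := ncard_eq_two.1 h2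
  refine (hasKEqMinor_addVertex_top (N := e.symm ⁻¹' insert x C) (e.injective.ne hab)
    fun i => ?_).of_isMinorOf (isMinorOf_addVertex_map e.symm.toHom e.symm.injective fun _ => id)
  by_cases hi : e.symm i ∈ insert x C
  · exact Or.inl hi
  · rw [← mem_compl_iff, hcompl, mem_insert_iff, mem_singleton_iff, e.symm_apply_eq,
      e.symm_apply_eq] at hi
    exact Or.inr hi

-- The new vertex is merged with `⟨0, 1⟩` and `⟨1, 0⟩` with `⟨3, 1⟩`; the only missing edges join
-- `⟨2, 1⟩` to `⟨2, 0⟩` and `⟨4, 1⟩` to `⟨4, 0⟩`.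
set_option synthInstance.maxSize 256 in
lemma hasKEqMinor_addVertex_K22222 :
    HasKEqMinor 9 (addVertex K22222 {v | v.2 = 0 ∨ v = ⟨0, 1⟩}) := by
  refine ⟨s(2, 6), s(3, 8), by decide, by decide, by decide,
    isMinorOf_of_pairs
      ![none, some ⟨1, 1⟩, some ⟨2, 1⟩, some ⟨4, 1⟩, some ⟨0, 0⟩, some ⟨1, 0⟩, some ⟨2, 0⟩,
        some ⟨3, 0⟩, some ⟨4, 0⟩]
      ![some ⟨0, 1⟩, some ⟨1, 1⟩, some ⟨2, 1⟩, some ⟨4, 1⟩, some ⟨0, 0⟩, some ⟨3, 1⟩,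
        some ⟨2, 0⟩, some ⟨3, 0⟩, some ⟨4, 0⟩] ?_ ?_ ?_⟩ <;> decide

lemma fiveCliquesApexMinor_of_iso_K22222 (e : G ≃g K22222) : FiveCliquesApexMinor G := by
  intro C h5 hC x hx
  obtain ⟨ψ, hψx, hψC⟩ := exists_iso_K22222_of_isClique e hC h5 hx
  refine hasKEqMinor_addVertex_K22222.of_isMinorOf
    (isMinorOf_addVertex_map ψ.toHom ψ.injective ?_)
  rintro v (hv | rfl)
  exacts [Or.inr ((hψC v).2 hv), Or.inl hψx]

-- `⟨1, 0⟩` is merged with `⟨2, 0⟩`; the only missing edges are the parts `3` and `4`.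
set_option synthInstance.maxSize 256 in
lemma hasKEqMinor_K22222_sup_edge :
    HasKEqMinor 9 (K22222 ⊔ fromEdgeSet {s(⟨0, 0⟩, ⟨0, 1⟩)}) := by
  refine ⟨s(5, 6), s(7, 8), by decide, by decide, by decide,
    isMinorOf_of_pairs ![⟨1, 0⟩, ⟨1, 1⟩, ⟨2, 1⟩, ⟨0, 0⟩, ⟨0, 1⟩, ⟨3, 0⟩, ⟨3, 1⟩, ⟨4, 0⟩, ⟨4, 1⟩]
      ![⟨2, 0⟩, ⟨1, 1⟩, ⟨2, 1⟩, ⟨0, 0⟩, ⟨0, 1⟩, ⟨3, 0⟩, ⟨3, 1⟩, ⟨4, 0⟩, ⟨4, 1⟩] ?_ ?_ ?_⟩ <;>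
    decide

lemma hasKEqMinor_sup_edge_of_iso_K22222 (e : G ≃g K22222) {x y : V} (hxy : x ≠ y)
    (hna : ¬ G.Adj x y) : HasKEqMinor 9 (G ⊔ fromEdgeSet {s(x, y)}) := by
  obtain ⟨ψ, rfl, rfl⟩ := exists_iso_K22222_of_not_adj e hxy hna
  exact hasKEqMinor_K22222_sup_edge.of_isMinorOf (isMinorOf_sup_edge_map ψ.toHom ψ.injective _ _)

end Properties

section Gluing

variable {V : Type} {G : SimpleGraph V} {A B C : Set V}

lemma ncard_preimage_val (hCA : C ⊆ A) : (Subtype.val ⁻¹' C : Set A).ncard = C.ncard :=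
  ncard_preimage_of_injective_subset_range Subtype.val_injective (by simpa using hCA)

lemma isClique_induce_preimage (hC : G.IsClique C) :
    (G.induce A).IsClique (Subtype.val ⁻¹' C) :=
  isClique_induce_iff.2 (hC.subset (image_preimage_subset _ _))

lemma FiveCliquesDominable.exists_of_induce (h : FiveCliquesDominable (G.induce A))
    (hCA : C ⊆ A) (h5 : C.ncard = 5) (hC : G.IsClique C) {y : V} (hyA : y ∈ A) (hy : y ∉ C) :
    ∃ L ⊆ A, y ∈ L ∧ IsDominatingBranchSet G C L := by
  obtain ⟨L, hyL, hconn, hdisj, hdom⟩ := h _ (by rw [ncard_preimage_val hCA, h5])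
    (isClique_induce_preimage hC) ⟨y, hyA⟩ hy
  refine ⟨Subtype.val '' L, image_subset_iff.2 fun l _ => l.2, ⟨⟨y, hyA⟩, hyL, rfl⟩,
    induce_image_connected (Embedding.induce A).toHom hconn,
    Set.disjoint_left.2 fun _ ⟨l, hl, hla⟩ hc =>
      Set.disjoint_left.1 hdisj hl (show (l : V) ∈ C from hla ▸ hc), fun c hc => ?_⟩
  obtain ⟨l, hl, hlc⟩ := hdom ⟨c, hCA hc⟩ hc
  exact ⟨l, mem_image_of_mem _ hl, hlc⟩

lemma FiveCliquesApexMinor.hasKEqMinor_of_induce (h : FiveCliquesApexMinor (G.induce A))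
    (hCA : C ⊆ A) (h5 : C.ncard = 5) (hC : G.IsClique C) {x : V} (hxA : x ∈ A) (hx : x ∉ C) :
    HasKEqMinor 9 (addVertex G (insert x C)) :=
  (h _ (by rw [ncard_preimage_val hCA, h5]) (isClique_induce_preimage hC) ⟨x, hxA⟩ hx).of_isMinorOf
    (isMinorOf_addVertex_map (Embedding.induce A).toHom Subtype.val_injective
      (by rintro _ (rfl | hn); exacts [mem_insert _ _, mem_insert_of_mem _ hn]))

structure IsFiveCliqueSeparation (G : SimpleGraph V) (A B : Set V) : Prop where
  union_eq : A ∪ B = univ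
  ncard_inter : (A ∩ B).ncard = 5
  isClique_inter : G.IsClique (A ∩ B)
  not_adj : ∀ u ∈ A \ B, ∀ v ∈ B \ A, ¬ G.Adj u v

namespace IsFiveCliqueSeparation

lemma symm (hs : IsFiveCliqueSeparation G A B) : IsFiveCliqueSeparation G B A :=
  ⟨by rw [union_comm, hs.union_eq], by rw [inter_comm, hs.ncard_inter],
    by rw [inter_comm]; exact hs.isClique_inter, fun u hu v hv h => hs.not_adj v hv u hu h.symm⟩

lemma mem_right (hs : IsFiveCliqueSeparation G A B) {x : V} (hx : x ∉ A) : x ∈ B :=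
  (hs.union_eq ▸ mem_univ x : x ∈ A ∪ B).resolve_left hx

lemma subset_or_subset (hs : IsFiveCliqueSeparation G A B) (hC : G.IsClique C) :
    C ⊆ A ∨ C ⊆ B := by
  by_contra! h
  obtain ⟨⟨a, haC, haA⟩, ⟨b, hbC, hbB⟩⟩ := And.intro (not_subset.1 h.1) (not_subset.1 h.2)
  have hbA : b ∈ A := by_contra fun hbA => hbB (hs.mem_right hbA)
  exact hs.not_adj b ⟨hbA, hbB⟩ a ⟨hs.mem_right haA, haA⟩
    (hC hbC haC fun hab => haA (hab ▸ hbA))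

lemma exists_mem_inter_notMem (hs : IsFiveCliqueSeparation G A B) (h5 : C.ncard = 5)
    (hCB : ¬ C ⊆ B) : ∃ c ∈ A ∩ B, c ∉ C := by
  by_contra! h
  have hfin : C.Finite := finite_of_ncard_pos (by omega)
  exact hCB (eq_of_subset_of_ncard_le h (by rw [h5, hs.ncard_inter]) hfin ▸ inter_subset_right)

lemma exists_dominatingBranchSet (hs : IsFiveCliqueSeparation G A B)
    (hB : FiveCliquesDominable (G.induce B)) {y : V} (hy : y ∉ A) :
    ∃ L, y ∈ L ∧ IsDominatingBranchSet G (A ∩ B) L ∧ Disjoint L A := by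
  obtain ⟨L, hLB, hyL, hL⟩ := hB.exists_of_induce inter_subset_right hs.ncard_inter
    hs.isClique_inter (hs.mem_right hy) fun h => hy h.1
  exact ⟨L, hyL, hL,
    Set.disjoint_left.2 fun l hl hlA => Set.disjoint_left.1 hL.2.1 hl ⟨hlA, hLB hl⟩⟩

lemma exists_dominatingBranchSet_of_subset (hs : IsFiveCliqueSeparation G A B)
    (hA : FiveCliquesDominable (G.induce A)) (hB : FiveCliquesDominable (G.induce B))
    (hCA : C ⊆ A) (h5 : C.ncard = 5) (hC : G.IsClique C) {y : V} (hy : y ∉ C) :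
    ∃ L, y ∈ L ∧ IsDominatingBranchSet G C L := by
  by_cases hyA : y ∈ A
  · obtain ⟨L, -, hyL, hL⟩ := hA.exists_of_induce hCA h5 hC hyA hy
    exact ⟨L, hyL, hL⟩
  by_cases hCB : C ⊆ B
  · obtain ⟨L, -, hyL, hL⟩ := hB.exists_of_induce hCB h5 hC (hs.mem_right hyA) hy
    exact ⟨L, hyL, hL⟩
  obtain ⟨c, hcS, hcC⟩ := hs.exists_mem_inter_notMem h5 hCB
  obtain ⟨U, -, hcU, hUconn, hUC, hUdom⟩ := hA.exists_of_induce hCA h5 hC hcS.1 hcC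
  obtain ⟨L, hyL, ⟨hLconn, -, hLdom⟩, hLA⟩ := hs.exists_dominatingBranchSet hB hyA
  obtain ⟨l, hl, hlc⟩ := hLdom c hcS
  refine ⟨L ∪ U, Or.inl hyL,
    connected_induce_union hLconn.preconnected hUconn.preconnected hl hcU hlc,
    disjoint_union_left.2 ⟨hLA.mono_right hCA, hUC⟩, fun c' hc' => ?_⟩
  obtain ⟨u, hu, huc⟩ := hUdom c' hc'
  exact ⟨u, Or.inr hu, huc⟩

lemma fiveCliquesDominable (hs : IsFiveCliqueSeparation G A B)
    (hA : FiveCliquesDominable (G.induce A)) (hB : FiveCliquesDominable (G.induce B)) :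
    FiveCliquesDominable G := fun _ h5 hC _ hy =>
  (hs.subset_or_subset hC).elim
    (fun hCA => hs.exists_dominatingBranchSet_of_subset hA hB hCA h5 hC hy)
    fun hCB => hs.symm.exists_dominatingBranchSet_of_subset hB hA hCB h5 hC hy

lemma hasKEqMinor_addVertex_of_subset (hs : IsFiveCliqueSeparation G A B)
    (hA : FiveCliquesApexMinor (G.induce A)) (hB : FiveCliquesApexMinor (G.induce B))
    (hBd : FiveCliquesDominable (G.induce B)) (hCA : C ⊆ A) (h5 : C.ncard = 5)
    (hC : G.IsClique C) {x : V} (hx : x ∉ C) : HasKEqMinor 9 (addVertex G (insert x C)) := by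
  by_cases hxA : x ∈ A
  · exact hA.hasKEqMinor_of_induce hCA h5 hC hxA hx
  by_cases hCB : C ⊆ B
  · exact hB.hasKEqMinor_of_induce hCB h5 hC (hs.mem_right hxA) hx
  obtain ⟨c, hcS, hcC⟩ := hs.exists_mem_inter_notMem h5 hCB
  obtain ⟨L, hxL, ⟨hLconn, -, hLdom⟩, hLA⟩ := hs.exists_dominatingBranchSet hBd hxA
  have hconn : ((addVertex G (insert x C)).induce (insert none (some '' L))).Connected := by
    rw [insert_eq]
    exact connected_induce_union (induce_singleton_connected _ _).preconnected
      (induce_image_connected (addVertex.inclusion G _) hLconn).preconnected rfl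
      (mem_image_of_mem _ hxL) (mem_insert x C)
  refine (hA _ (by rw [ncard_preimage_val hCA, h5]) (isClique_induce_preimage hC) ⟨c, hcS.1⟩
    hcC).of_isMinorOf (isMinorOf_addVertex
      ((addVertex.inclusion G _).comp (Embedding.induce A).toHom)
      ((Option.some_injective _).comp Subtype.val_injective) hconn ?_ ?_)
  · rintro a (h | ⟨l, hl, hla⟩)
    · exact Option.some_ne_none _ h
    · obtain rfl : l = a := Option.some_injective _ hla
      exact Set.disjoint_left.1 hLA hl a.2
  · rintro n (rfl | hn)
    · obtain ⟨l, hl, hlc⟩ := hLdom c hcS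
      exact ⟨some l, mem_insert_of_mem _ (mem_image_of_mem _ hl), hlc⟩
    · exact ⟨none, mem_insert _ _, mem_insert_of_mem _ hn⟩

lemma fiveCliquesApexMinor (hs : IsFiveCliqueSeparation G A B)
    (hA : FiveCliquesApexMinor (G.induce A)) (hB : FiveCliquesApexMinor (G.induce B))
    (hAd : FiveCliquesDominable (G.induce A)) (hBd : FiveCliquesDominable (G.induce B)) :
    FiveCliquesApexMinor G := fun _ h5 hC _ hx =>
  (hs.subset_or_subset hC).elim
    (fun hCA => hs.hasKEqMinor_addVertex_of_subset hA hB hBd hCA h5 hC hx)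
    fun hCB => hs.symm.hasKEqMinor_addVertex_of_subset hB hA hAd hCB h5 hC hx

lemma hasKEqMinor_sup_edge (hs : IsFiveCliqueSeparation G A B)
    (hA : FiveCliquesApexMinor (G.induce A)) (hB : FiveCliquesDominable (G.induce B))
    {x y : V} (hxA : x ∈ A) (hxB : x ∉ B) (hyA : y ∉ A) :
    HasKEqMinor 9 (G ⊔ fromEdgeSet {s(x, y)}) := by
  obtain ⟨L, hyL, ⟨hLconn, -, hLdom⟩, hLA⟩ := hs.exists_dominatingBranchSet hB hyA
  let f : G.induce A →g G ⊔ fromEdgeSet {s(x, y)} := ⟨Subtype.val, Or.inl⟩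
  refine (hA _ (by rw [ncard_preimage_val inter_subset_left, hs.ncard_inter])
    (isClique_induce_preimage hs.isClique_inter) ⟨x, hxA⟩ fun h => hxB h.2).of_isMinorOf
    (isMinorOf_addVertex f Subtype.val_injective (hLconn.mono fun _ _ => Or.inl)
      (fun a ha => Set.disjoint_left.1 hLA ha a.2) ?_)
  rintro n (rfl | hn)
  · exact ⟨y, hyL, Or.inr ⟨Sym2.eq_swap, (ne_of_mem_of_not_mem hxA hyA).symm⟩⟩
  · obtain ⟨l, hl, hln⟩ := hLdom n hn
    exact ⟨l, hl, Or.inl hln⟩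

end IsFiveCliqueSeparation

end Gluing

section Cockade

variable {V : Type} {G : SimpleGraph V}

theorem Cockade85.fiveCliquesDominable (h : Cockade85 G) : FiveCliquesDominable G := by
  induction h with
  | base₁ G hG =>
    obtain ⟨e⟩ := hG
    exact fiveCliquesDominable_of_forall_adj fun _ _ => adj_of_iso_top e
  | base₂ G hG =>
    obtain ⟨e⟩ := hG
    exact fiveCliquesDominable_of_iso_K22222 e
  | glue G A B hU _ _ h5 hS hsep _ _ ihA ihB =>
    exact IsFiveCliqueSeparation.fiveCliquesDominable ⟨hU, h5, hS, hsep⟩ ihA ihB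

theorem Cockade85.fiveCliquesApexMinor (h : Cockade85 G) : FiveCliquesApexMinor G := by
  induction h with
  | base₁ G hG =>
    obtain ⟨e⟩ := hG
    exact fiveCliquesApexMinor_of_iso_top e
  | base₂ G hG =>
    obtain ⟨e⟩ := hG
    exact fiveCliquesApexMinor_of_iso_K22222 e
  | glue G A B hU _ _ h5 hS hsep hA hB ihA ihB =>
    exact IsFiveCliqueSeparation.fiveCliquesApexMinor ⟨hU, h5, hS, hsep⟩ ihA ihB
      (Cockade85.fiveCliquesDominable hA) (Cockade85.fiveCliquesDominable hB)

end Cockade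

theorem cockade_add_edge {V : Type} (G : SimpleGraph V) (h : Cockade85 G)
    (x y : V) (hxy : x ≠ y) (hna : ¬ G.Adj x y) :
    HasKEqMinor 9 (G ⊔ SimpleGraph.fromEdgeSet {s(x, y)}) := by
  induction h with
  | base₁ G hG =>
    obtain ⟨e⟩ := hG
    exact absurd (adj_of_iso_top e hxy) hna
  | base₂ G hG =>
    obtain ⟨e⟩ := hG
    exact hasKEqMinor_sup_edge_of_iso_K22222 e hxy hna
  | glue G A B hU _ _ h5 hS hsep hA hB ihA ihB =>
    have hs : IsFiveCliqueSeparation G A B := ⟨hU, h5, hS, hsep⟩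
    have hne {S : Set _} (hx : x ∈ S) (hy : y ∈ S) : (⟨x, hx⟩ : S) ≠ ⟨y, hy⟩ :=
      fun hxy' => hxy (congrArg Subtype.val hxy')
    by_cases hxyA : x ∈ A ∧ y ∈ A
    · exact (ihA _ _ (hne hxyA.1 hxyA.2) hna).of_isMinorOf
        (isMinorOf_sup_edge_map (Embedding.induce A).toHom Subtype.val_injective _ _)
    by_cases hxyB : x ∈ B ∧ y ∈ B
    · exact (ihB _ _ (hne hxyB.1 hxyB.2) hna).of_isMinorOf
        (isMinorOf_sup_edge_map (Embedding.induce B).toHom Subtype.val_injective _ _)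
    by_cases hxA : x ∈ A
    · have hyA : y ∉ A := fun hyA => hxyA ⟨hxA, hyA⟩
      exact hs.hasKEqMinor_sup_edge (Cockade85.fiveCliquesApexMinor hA)
        (Cockade85.fiveCliquesDominable hB) hxA (fun hxB => hxyB ⟨hxB, hs.mem_right hyA⟩) hyA
    · have hyB : y ∉ B := fun hyB => hxyB ⟨hs.mem_right hxA, hyB⟩
      exact hs.symm.hasKEqMinor_sup_edge (Cockade85.fiveCliquesApexMinor hB)
        (Cockade85.fiveCliquesDominable hA) (hs.mem_right hxA) hxA hyB
end

section
/- Let G be a graph with 7 ≤ |V(G)| ≤ 11 and minimum degree at least 6. If G is not 4-connected, then G contains K_5 as a subgraph. -/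
open SimpleGraph

/-! If a set `S` of at most three vertices separates `G`, each vertex of a component `C` of
`G - S` has all of its at least six neighbours in `C ∪ S`, so `|C| + |S| ≥ 7`. Two such
components together with `S` fit into eleven vertices only if `|S| = 3` and both components have
exactly four vertices. Then every vertex `v` of such a component `C` is adjacent to all of
`(C \ {v}) ∪ S`, so `C` together with any vertex of `S` spans a `K₅`. -/

namespace SimpleGraph

variable {V : Type*} {G : SimpleGraph V}

lemma exists_ne_connectedComponent_of_not_connected [Nonempty V] (h : ¬ G.Connected) :
    ∃ K₁ K₂ : G.ConnectedComponent, K₁ ≠ K₂ := by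
  have hpre : ¬ G.Preconnected := fun hp => h ⟨hp⟩
  simp only [Preconnected, not_forall] at hpre
  obtain ⟨u, v, huv⟩ := hpre
  exact ⟨G.connectedComponentMk u, G.connectedComponentMk v,
    fun he => huv (ConnectedComponent.eq.mp he)⟩

lemma exists_isNClique_of_isClique [Finite V] {T : Set V} {n : ℕ} (hT : G.IsClique T)
    (hn : T.ncard = n) : ∃ s : Finset V, G.IsNClique n s :=
  ⟨T.toFinite.toFinset, by simpa using hT, by rw [← Set.ncard_eq_toFinset_card T, hn]⟩

variable {S : Set V}

lemma neighborSet_subset_component_union (K : (G.induce Sᶜ).ConnectedComponent) {v : ↥Sᶜ}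
    (hv : v ∈ K.supp) : G.neighborSet v ⊆ (Subtype.val '' K.supp \ {(v : V)}) ∪ S := by
  intro w hw
  by_cases hwS : w ∈ S
  · exact Or.inr hwS
  · have hadj : (G.induce Sᶜ).Adj v ⟨w, hwS⟩ := hw
    exact Or.inl ⟨⟨⟨w, hwS⟩, K.mem_supp_of_adj_mem_supp hv hadj, rfl⟩,
      fun h => G.loopless.irrefl w (h ▸ hw)⟩

lemma ncard_component_sdiff_union_lt [Finite V] (K : (G.induce Sᶜ).ConnectedComponent)
    {v : ↥Sᶜ} (hv : v ∈ K.supp) :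
    ((Subtype.val '' K.supp \ {(v : V)}) ∪ S).ncard < K.supp.ncard + S.ncard := by
  have hlt : (Subtype.val '' K.supp \ {(v : V)}).ncard < K.supp.ncard := by
    rw [← Set.ncard_image_of_injective K.supp Subtype.val_injective]
    exact Set.ncard_sdiff_singleton_lt_of_mem (Set.mem_image_of_mem _ hv)
  exact (Set.ncard_union_le _ _).trans_lt (by omega)

lemma ncard_component_add_ncard_separator_le [Finite V]
    {K₁ K₂ : (G.induce Sᶜ).ConnectedComponent} (hK : K₁ ≠ K₂) :
    K₁.supp.ncard + K₂.supp.ncard + S.ncard ≤ Nat.card V := by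
  have hdisj : Disjoint (Subtype.val '' (K₁.supp ∪ K₂.supp)) S :=
    Set.disjoint_left.mpr fun _ ⟨u, _, hu⟩ => hu ▸ u.2
  calc K₁.supp.ncard + K₂.supp.ncard + S.ncard
      = (Subtype.val '' (K₁.supp ∪ K₂.supp)).ncard + S.ncard := by
        rw [Set.ncard_image_of_injective _ Subtype.val_injective,
          Set.ncard_union_eq (pairwise_disjoint_supp_connectedComponent _ hK)]
    _ = (Subtype.val '' (K₁.supp ∪ K₂.supp) ∪ S).ncard := (Set.ncard_union_eq hdisj).symm
    _ ≤ Nat.card V := Set.ncard_le_card _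

variable {δ : ℕ}

lemma lt_ncard_component_add_ncard_separator [Finite V]
    (hdeg : ∀ v, δ ≤ (G.neighborSet v).ncard) (K : (G.induce Sᶜ).ConnectedComponent) :
    δ < K.supp.ncard + S.ncard := by
  obtain ⟨v, hv⟩ := K.nonempty_supp
  calc δ ≤ (G.neighborSet v).ncard := hdeg v
    _ ≤ ((Subtype.val '' K.supp \ {(v : V)}) ∪ S).ncard :=
        Set.ncard_le_ncard (neighborSet_subset_component_union K hv)
    _ < K.supp.ncard + S.ncard := ncard_component_sdiff_union_lt K hv

lemma neighborSet_eq_component_union [Finite V] (hdeg : ∀ v, δ ≤ (G.neighborSet v).ncard)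
    (K : (G.induce Sᶜ).ConnectedComponent) (htight : K.supp.ncard + S.ncard ≤ δ + 1)
    {v : ↥Sᶜ} (hv : v ∈ K.supp) :
    G.neighborSet v = (Subtype.val '' K.supp \ {(v : V)}) ∪ S := by
  refine Set.eq_of_subset_of_ncard_le (neighborSet_subset_component_union K hv) ?_
  have := ncard_component_sdiff_union_lt K hv
  have := hdeg v
  omega

lemma isClique_insert_component [Finite V] (hdeg : ∀ v, δ ≤ (G.neighborSet v).ncard)
    (K : (G.induce Sᶜ).ConnectedComponent) (htight : K.supp.ncard + S.ncard ≤ δ + 1)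
    {s : V} (hs : s ∈ S) : G.IsClique (insert s (Subtype.val '' K.supp)) := by
  have hnbr : ∀ v ∈ Subtype.val '' K.supp, ∀ w ∈ (Subtype.val '' K.supp \ {v}) ∪ S,
      G.Adj v w := by
    rintro _ ⟨v, hv, rfl⟩ w hw
    rwa [← neighborSet_eq_component_union hdeg K htight hv] at hw
  refine IsClique.insert (fun v hv w hw hvw => hnbr v hv w (Or.inl ⟨hw, hvw.symm⟩)) ?_
  exact fun v hv _ => (hnbr v hv s (Or.inr hs)).symm

end SimpleGraph

open SimpleGraph in
theorem not_four_connected_K5 {V : Type} [Fintype V] (G : SimpleGraph V)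
    (h7 : 7 ≤ Fintype.card V) (h11 : Fintype.card V ≤ 11)
    (hdeg : ∀ v : V, 6 ≤ (G.neighborSet v).ncard)
    (hnc : ¬ IsKConnected 4 G) :
    ∃ s : Finset V, G.IsNClique 5 s := by
  obtain ⟨S, hS4, hSdisc⟩ : ∃ S : Set V, S.ncard < 4 ∧ ¬ (G.induce Sᶜ).Connected := by
    simpa [IsKConnected, show 4 < Fintype.card V by omega] using hnc
  have : Nonempty ↥Sᶜ := by
    refine (Set.nonempty_compl.mpr fun hS => ?_).to_subtype
    rw [hS, Set.ncard_univ, Nat.card_eq_fintype_card] at hS4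
    omega
  obtain ⟨K₁, K₂, hK⟩ := exists_ne_connectedComponent_of_not_connected hSdisc
  have h₁ := lt_ncard_component_add_ncard_separator hdeg K₁
  have h₂ := lt_ncard_component_add_ncard_separator hdeg K₂
  have hsum := ncard_component_add_ncard_separator_le hK
  rw [Nat.card_eq_fintype_card] at hsum
  obtain ⟨s, hs⟩ : S.Nonempty := Set.nonempty_of_ncard_ne_zero (by omega)
  refine exists_isNClique_of_isClique (isClique_insert_component hdeg K₁ (by omega) hs) ?_
  have hsK : s ∉ Subtype.val '' K₁.supp := fun ⟨u, _, hu⟩ => u.2 (hu ▸ hs)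
  rw [Set.ncard_insert_of_notMem hsK, Set.ncard_image_of_injective _ Subtype.val_injective]
  omega
end

section
/- Let G be a graph with 8 ≤ |V(G)| ≤ 11 and minimum degree at least 6, and let v_1, ..., v_6 be six distinct vertices of G with v_1 and v_2 nonadjacent. Then there exists a connected component C of G - {v_1,...,v_6} such that either both v_1 and v_2 have a neighbor in C, or each of v_3, v_4, v_5, v_6 has a neighbor in C. -/
open SimpleGraph

/-!
Write `S = {v₁, …, v₆}`. Each of the nonadjacent vertices `v₁, v₂` has at least six neighbours,
at most four of them in `S`, so both have a neighbour in `G - S`, a graph on at most five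
vertices. If these neighbours lie in different components, one of the two components has at
most two vertices. A vertex of that component has at most one neighbour outside `S`, hence at
least five in `S`; so if it is not adjacent to `v₂` (resp. `v₁`), it is adjacent to all of
`v₃, …, v₆`.
-/

namespace SimpleGraph

variable {V : Type} {G : SimpleGraph V}

def HasNeighborIn {S : Set V} (c : (G.induce Sᶜ).ConnectedComponent) (x : V) : Prop :=
  ∃ u, (G.induce Sᶜ).connectedComponentMk u = c ∧ G.Adj x ↑u

lemma exists_adj_notMem_of_not_adj [Finite V] {S : Set V} {a b : V} (ha : a ∈ S) (hb : b ∈ S)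
    (hab : a ≠ b) (hnadj : ¬ G.Adj a b) (hS : S.ncard ≤ (G.neighborSet a).ncard + 1) :
    ∃ x, G.Adj a x ∧ x ∉ S := by
  have hsub : G.neighborSet a ∩ S ⊆ S \ {a, b} := by
    rintro x ⟨hx, hxS⟩
    refine ⟨hxS, ?_⟩
    rintro (rfl | rfl)
    exacts [G.irrefl hx, hnadj hx]
  have hpair : (S \ {a, b}).ncard + 2 = S.ncard := by
    rw [Set.ncard_sdiff (Set.pair_subset ha hb), Set.ncard_pair hab,
      Nat.sub_add_cancel (Set.ncard_pair hab ▸ Set.ncard_le_ncard (Set.pair_subset ha hb))]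
  have hsplit := Set.ncard_inter_add_ncard_sdiff_eq_ncard (G.neighborSet a) S
  have hle := Set.ncard_le_ncard hsub
  obtain ⟨x, hx, hxS⟩ := Set.nonempty_of_ncard_ne_zero (s := G.neighborSet a \ S) (by omega)
  exact ⟨x, hx, hxS⟩

lemma ncard_neighborSet_diff_lt [Finite V] {S : Set V} (w : ↥Sᶜ) :
    (G.neighborSet w \ S).ncard < ((G.induce Sᶜ).connectedComponentMk w).supp.ncard := by
  set c := (G.induce Sᶜ).connectedComponentMk w
  have hsub : G.neighborSet w \ S ⊆ Subtype.val '' (c.supp \ {w}) := by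
    rintro x ⟨hx, hxS⟩
    refine ⟨⟨x, hxS⟩, ⟨?_, ?_⟩, rfl⟩
    · have hadj : (G.induce Sᶜ).Adj w ⟨x, hxS⟩ := hx
      exact ConnectedComponent.sound hadj.reachable.symm
    · rintro rfl
      exact G.irrefl hx
  have hw : w ∈ c.supp := rfl
  calc (G.neighborSet w \ S).ncard
      ≤ (c.supp \ {w}).ncard := by
        rw [← Set.ncard_image_of_injective _ Subtype.val_injective]
        exact Set.ncard_le_ncard hsub
    _ < c.supp.ncard := Set.ncard_sdiff_singleton_lt_of_mem hw

lemma adj_of_mem_of_ncard_supp_le [Finite V] {S : Set V} {w : ↥Sᶜ} {b x : V}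
    (hdeg : S.ncard + ((G.induce Sᶜ).connectedComponentMk w).supp.ncard ≤
      (G.neighborSet w).ncard + 2)
    (hb : b ∈ S) (hwb : ¬ G.Adj w b) (hx : x ∈ S) (hxb : x ≠ b) : G.Adj w x := by
  have hsub : G.neighborSet w ∩ S ⊆ S \ {b} := by
    rintro y ⟨hy, hyS⟩
    exact ⟨hyS, by rintro rfl; exact hwb hy⟩
  have hsplit := Set.ncard_inter_add_ncard_sdiff_eq_ncard (G.neighborSet w) S
  have hout := ncard_neighborSet_diff_lt (G := G) w
  have hS : (S \ {b}).ncard + 1 = S.ncard := Set.ncard_sdiff_singleton_add_one hb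
  have heq : G.neighborSet w ∩ S = S \ {b} := Set.eq_of_subset_of_ncard_le hsub (by omega)
  have hx' : x ∈ G.neighborSet w ∩ S := heq ▸ ⟨hx, hxb⟩
  exact hx'.1

lemma hasNeighborIn_or_forall_of_ncard_supp_le [Finite V] {S : Set V} {δ : ℕ}
    (hδ : ∀ w, δ ≤ (G.neighborSet w).ncard) (c : (G.induce Sᶜ).ConnectedComponent)
    (hc : S.ncard + c.supp.ncard ≤ δ + 2) {b : V} (hb : b ∈ S) :
    HasNeighborIn c b ∨ ∀ x ∈ S, x ≠ b → HasNeighborIn c x := by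
  by_contra! h
  obtain ⟨hnb, x, hx, hxb, hnx⟩ := h
  induction c using ConnectedComponent.ind with
  | h w =>
    have hwb : ¬ G.Adj w b := fun h => hnb ⟨w, rfl, h.symm⟩
    exact hnx ⟨w, rfl, (adj_of_mem_of_ncard_supp_le (by linarith [hδ w]) hb hwb hx hxb).symm⟩

lemma ConnectedComponent.ncard_supp_add_ncard_supp_le [Finite V] {c c' : G.ConnectedComponent}
    (h : c ≠ c') : c.supp.ncard + c'.supp.ncard ≤ Nat.card V := by
  rw [← Set.ncard_union_eq (G.pairwise_disjoint_supp_connectedComponent h)]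
  exact Set.ncard_le_card _

end SimpleGraph

theorem edge_or_K14_component_general {V : Type} [Fintype V] (G : SimpleGraph V)
    (h11 : Fintype.card V ≤ 11)
    (hdeg : ∀ w : V, 6 ≤ (G.neighborSet w).ncard)
    (v : Fin 6 → V) (hv : Function.Injective v)
    (hna : ¬ G.Adj (v 0) (v 1)) :
    ∃ c : (G.induce (Set.range v)ᶜ).ConnectedComponent,
      ((∃ u, (G.induce (Set.range v)ᶜ).connectedComponentMk u = c ∧ G.Adj (v 0) ↑u) ∧
       (∃ u, (G.induce (Set.range v)ᶜ).connectedComponentMk u = c ∧ G.Adj (v 1) ↑u)) ∨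
      (∀ i : Fin 6, 2 ≤ (i : ℕ) →
        ∃ u, (G.induce (Set.range v)ᶜ).connectedComponentMk u = c ∧ G.Adj (v i) ↑u) := by
  set S := Set.range v
  have hS : S.ncard = 6 := by simp [S, Set.ncard_range_of_injective hv]
  have hSc : Nat.card ↥Sᶜ ≤ 5 := by
    have := Set.ncard_add_ncard_compl S
    rw [Nat.card_coe_set_eq]
    rw [Nat.card_eq_fintype_card] at this
    omega
  have hv01 : v 0 ≠ v 1 := hv.ne (by decide)
  have hne : ∀ i : Fin 6, 2 ≤ (i : ℕ) → ∀ j : Fin 6, (j : ℕ) < 2 → v i ≠ v j :=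
    fun i hi j hj h => by have := hv h; omega
  obtain ⟨x₀, hx₀, hx₀S⟩ := exists_adj_notMem_of_not_adj (Set.mem_range_self 0)
    (Set.mem_range_self 1) hv01 hna (by linarith [hdeg (v 0)])
  obtain ⟨x₁, hx₁, hx₁S⟩ := exists_adj_notMem_of_not_adj (Set.mem_range_self 1)
    (Set.mem_range_self 0) hv01.symm (fun h => hna h.symm) (by linarith [hdeg (v 1)])
  set c₀ := (G.induce Sᶜ).connectedComponentMk ⟨x₀, hx₀S⟩
  set c₁ := (G.induce Sᶜ).connectedComponentMk ⟨x₁, hx₁S⟩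
  by_cases hc : c₀ = c₁
  · exact ⟨c₀, .inl ⟨⟨_, rfl, hx₀⟩, ⟨_, hc.symm, hx₁⟩⟩⟩
  -- Two distinct components share at most five vertices, so one of them has at most two.
  have hsum := ConnectedComponent.ncard_supp_add_ncard_supp_le hc
  rcases le_or_gt c₀.supp.ncard 2 with hc₀ | hc₁
  · rcases hasNeighborIn_or_forall_of_ncard_supp_le hdeg c₀ (by omega) (Set.mem_range_self 1)
      with h | h
    · exact ⟨c₀, .inl ⟨⟨_, rfl, hx₀⟩, h⟩⟩
    · exact ⟨c₀, .inr fun i hi => h _ (Set.mem_range_self i) (hne i hi 1 (by decide))⟩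
  · rcases hasNeighborIn_or_forall_of_ncard_supp_le hdeg c₁ (by omega) (Set.mem_range_self 0)
      with h | h
    · exact ⟨c₁, .inl ⟨h, ⟨_, rfl, hx₁⟩⟩⟩
    · exact ⟨c₁, .inr fun i hi => h _ (Set.mem_range_self i) (hne i hi 0 (by decide))⟩

theorem edge_or_K14_component {V : Type} [Fintype V] (G : SimpleGraph V)
    (h8 : 8 ≤ Fintype.card V) (h11 : Fintype.card V ≤ 11)
    (hdeg : ∀ w : V, 6 ≤ (G.neighborSet w).ncard)
    (v : Fin 6 → V) (hv : Function.Injective v)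
    (hna : ¬ G.Adj (v 0) (v 1)) :
    ∃ c : (G.induce (Set.range v)ᶜ).ConnectedComponent,
      ((∃ u, (G.induce (Set.range v)ᶜ).connectedComponentMk u = c ∧ G.Adj (v 0) ↑u) ∧
       (∃ u, (G.induce (Set.range v)ᶜ).connectedComponentMk u = c ∧ G.Adj (v 1) ↑u)) ∨
      (∀ i : Fin 6, 2 ≤ (i : ℕ) →
        ∃ u, (G.induce (Set.range v)ᶜ).connectedComponentMk u = c ∧ G.Adj (v i) ↑u) :=
  edge_or_K14_component_general G h11 hdeg v hv hna
end
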